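/- arXiv:2102.02685 — 3 statements merged into one kernel-verified Lean document; each statement's English description precedes it below -/
import Mathlib

section
/- For every μ > 0, the equation e^{-μx} = 1 - x has a greatest non-negative solution c(μ) in [0,1], and if μ ≤ 1 then c(μ) = 0. -/
/-- For every μ > 0, the equation e^{-μx} = 1 - x has a greatest non-negative
solution c, it lies in [0,1], and if μ ≤ 1 then c = 0. -/
theorem stmt_0 (μ : ℝ) (hμ : 0 < μ) :
    ∃ c : ℝ, c ∈ Set.Icc (0 : ℝ) 1 ∧
      IsGreatest {x : ℝ | 0 ≤ x ∧ Real.exp (-μ * x) = 1 - x} c ∧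
      (μ ≤ 1 → c = 0) := by
  set S : Set ℝ := {x : ℝ | 0 ≤ x ∧ Real.exp (-μ * x) = 1 - x} with hS
  have h0 : (0 : ℝ) ∈ S := by simp [hS]
  have hub : ∀ x ∈ S, x ≤ 1 := by
    intro x hx
    have := Real.exp_pos (-μ * x)
    rw [hx.2] at this
    linarith
  have hbdd : BddAbove S := ⟨1, hub⟩
  have hclosed : IsClosed S := by
    have : S = {x : ℝ | 0 ≤ x} ∩ {x : ℝ | Real.exp (-μ * x) = 1 - x} := rfl
    rw [this]
    exact (isClosed_le continuous_const continuous_id).inter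
      (isClosed_eq (by fun_prop) (by fun_prop))
  have hmem : sSup S ∈ S := hclosed.csSup_mem ⟨0, h0⟩ hbdd
  have hge : IsGreatest S (sSup S) := ⟨hmem, fun x hx => le_csSup hbdd hx⟩
  refine ⟨sSup S, ⟨le_csSup hbdd h0, hub _ hmem⟩, hge, ?_⟩
  intro hμ1
  by_contra hne
  have hpos : 0 < sSup S := lt_of_le_of_ne (le_csSup hbdd h0) (Ne.symm hne)
  have hx : -μ * sSup S ≠ 0 := ne_of_lt (by nlinarith)
  have := Real.add_one_lt_exp hx
  rw [hmem.2] at this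
  nlinarith
end

section
/- If X is a random variable taking values in {0, 1, ..., k} such that for every m ≥ 0 the expectation of the binomial coefficient C(X, m) is at most 1/m!, then for every real t, E[e^{tX}] ≤ exp(e^t). -/
open MeasureTheory

/-- If X takes values in {0,...,k} and E[C(X,m)] ≤ 1/m! for every m ≥ 0,
then E[e^{tX}] ≤ exp(e^t) for every real t. -/
theorem stmt_4 {Ω : Type*} [MeasurableSpace Ω] (μ : Measure Ω)
    [IsProbabilityMeasure μ] (X : Ω → ℕ) (hmeas : Measurable X)
    (k : ℕ) (hbd : ∀ ω, X ω ≤ k)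
    (hmom : ∀ m : ℕ, ∫ ω, ((X ω).choose m : ℝ) ∂μ ≤ 1 / (Nat.factorial m))
    (t : ℝ) :
    ∫ ω, Real.exp (t * X ω) ∂μ ≤ Real.exp (Real.exp t) := by
  have hint : ∀ m : ℕ, Integrable (fun ω => ((X ω).choose m : ℝ)) μ := by
    intro m
    apply (integrable_const ((k.choose m : ℝ))).mono'
    · have hmc : Measurable (fun n : ℕ => ((n.choose m : ℝ))) := measurable_from_top
      exact (hmc.comp hmeas).aestronglyMeasurable
    · filter_upwards with ω
      rw [Real.norm_eq_abs, abs_of_nonneg (by positivity)]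
      exact_mod_cast Nat.choose_le_choose m (hbd ω)
  rcases le_or_gt t 0 with ht | ht
  · have h1 : ∫ ω, Real.exp (t * X ω) ∂μ ≤ ∫ _ω, (1:ℝ) ∂μ := by
      apply integral_mono_of_nonneg
      · filter_upwards with ω; positivity
      · exact integrable_const 1
      · filter_upwards with ω
        have : t * X ω ≤ 0 := mul_nonpos_of_nonpos_of_nonneg ht (by positivity)
        simpa using Real.exp_le_exp.2 this
    have h2 : (∫ _ω, (1:ℝ) ∂μ) = 1 := by simp
    have h3 : (1:ℝ) ≤ Real.exp (Real.exp t) := by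
      rw [show (1:ℝ) = Real.exp 0 by simp]
      exact Real.exp_le_exp.2 (Real.exp_nonneg t)
    linarith
  · set s : ℝ := Real.exp t - 1 with hs_def
    have hs : 0 ≤ s := by
      have := Real.one_le_exp (le_of_lt ht)
      simp [hs_def]; linarith
    have heq : ∀ ω, Real.exp (t * X ω)
        = ∑ m ∈ Finset.range (k+1), ((X ω).choose m : ℝ) * s ^ m := by
      intro ω
      have hn := hbd ω
      rw [mul_comm, Real.exp_nat_mul]
      have hst : Real.exp t = s + 1 := by simp [hs_def]
      rw [hst, add_pow]
      have hsum : ∑ m ∈ Finset.range (X ω + 1), s ^ m * 1 ^ (X ω - m) * ((X ω).choose m : ℝ)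
          = ∑ m ∈ Finset.range (X ω + 1), ((X ω).choose m : ℝ) * s ^ m := by
        apply Finset.sum_congr rfl; intro m _; ring
      rw [hsum]
      apply Finset.sum_subset
      · exact Finset.range_subset_range.2 (Nat.succ_le_succ hn)
      · intro m _ hm
        have : X ω < m := by
          simp only [Finset.mem_range, not_lt] at hm; omega
        simp [Nat.choose_eq_zero_of_lt this]
    calc ∫ ω, Real.exp (t * X ω) ∂μ
        = ∫ ω, ∑ m ∈ Finset.range (k+1), ((X ω).choose m : ℝ) * s ^ m ∂μ := by
          exact integral_congr_ae (Filter.Eventually.of_forall heq)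
      _ = ∑ m ∈ Finset.range (k+1), ∫ ω, ((X ω).choose m : ℝ) * s ^ m ∂μ := by
          exact integral_finset_sum _ (fun m _ => (hint m).mul_const _)
      _ = ∑ m ∈ Finset.range (k+1), (∫ ω, ((X ω).choose m : ℝ) ∂μ) * s ^ m := by
          simp [integral_mul_const]
      _ ≤ ∑ m ∈ Finset.range (k+1), s ^ m / (Nat.factorial m) := by
          apply Finset.sum_le_sum
          intro m _
          have := mul_le_mul_of_nonneg_right (hmom m) (pow_nonneg hs m)
          calc (∫ ω, ((X ω).choose m : ℝ) ∂μ) * s ^ m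
              ≤ (1 / (Nat.factorial m : ℝ)) * s ^ m := this
            _ = s ^ m / (Nat.factorial m) := by ring
      _ ≤ Real.exp s := Real.sum_le_exp_of_nonneg hs (k+1)
      _ ≤ Real.exp (Real.exp t) := Real.exp_le_exp.2 (by simp [hs_def])
end

section
/- Let X be the number of fixed points of a uniformly random permutation of {1,...,k}. Then for every real t, E[e^{tX}] ≤ exp(e^t). -/
/-!
Write `u = e^t - 1 ≥ 0` (the case `t ≤ 0` is trivial, every summand being at most `1`).
Expanding `e^{tX} = (1 + u)^X` over the subsets of the fixed-point set and exchanging the sums,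
the subset `S` contributes `u^{|S|}` times the number `(k - |S|)!` of permutations fixing `S`
pointwise, so `∑_σ e^{t X(σ)} = k! ∑_{m ≤ k} u^m / m! ≤ k! e^u ≤ k! e^{e^t}`.
-/

open Finset Nat Real

namespace Equiv.Perm

variable {α : Type*} [Fintype α] [DecidableEq α]

theorem card_filter_forall_mem_fixed (s : Finset α) :
    #{σ : Perm α | ∀ i ∈ s, σ i = i} = (Fintype.card α - #s)! := by
  have hfix : #{σ : Perm α | ∀ i ∈ s, σ i = i}
      = Fintype.card {σ : Perm α // ∀ i, ¬ i ∉ s → σ i = i} := by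
    simp only [not_not, Fintype.card_subtype]
  rw [hfix, ← Fintype.card_congr (Perm.subtypeEquivSubtypePerm (· ∉ s)), Fintype.card_perm,
    Fintype.card_subtype_compl, Fintype.card_coe]

theorem sum_one_add_pow_card_fixed {R : Type*} [CommSemiring R] (u : R) :
    ∑ σ : Perm α, (1 + u) ^ #{i | σ i = i}
      = ∑ m ∈ range (Fintype.card α + 1),
          ((Fintype.card α).choose m * (Fintype.card α - m)! : ℕ) * u ^ m := by
  have hexpand (σ : Perm α) : (1 + u) ^ #{i | σ i = i}
      = ∑ s : Finset α, if ∀ i ∈ s, σ i = i then u ^ #s else 0 := by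
    rw [← prod_const, prod_one_add, ← sum_filter]
    refine sum_congr ?_ fun s _ => prod_const _
    ext s
    simp [subset_iff]
  simp_rw [hexpand]
  rw [sum_comm]
  simp_rw [sum_ite, sum_const_zero, add_zero, sum_const, card_filter_forall_mem_fixed,
    nsmul_eq_mul]
  rw [← powerset_univ, sum_powerset_apply_card (fun m => ((Fintype.card α - m)! : R) * u ^ m),
    Finset.card_univ]
  simp only [nsmul_eq_mul, Nat.cast_mul, mul_assoc]

theorem sum_one_add_pow_card_fixed_le {u : ℝ} (hu : 0 ≤ u) :
    ∑ σ : Perm α, (1 + u) ^ #{i | σ i = i} ≤ (Fintype.card α)! * exp u := by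
  set n := Fintype.card α
  have hterm (m : ℕ) (hm : m ∈ range (n + 1)) :
      ((n.choose m * (n - m)! : ℕ) : ℝ) * u ^ m = n ! * (u ^ m / m !) := by
    have hmn : m ≤ n := Nat.lt_succ_iff.mp (mem_range.mp hm)
    rw [← Nat.choose_mul_factorial_mul_factorial hmn]
    push_cast
    field_simp
  rw [sum_one_add_pow_card_fixed, sum_congr rfl hterm, ← mul_sum]
  gcongr
  exact sum_le_exp_of_nonneg hu _

end Equiv.Perm

/-- If X is the number of fixed points of a uniformly random permutation of
{1,...,k}, then for every real t, E[e^{tX}] ≤ exp(e^t) (uniformly in k). -/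
theorem stmt_7 (k : ℕ) (t : ℝ) :
    (∑ σ : Equiv.Perm (Fin k),
        Real.exp (t * ((Finset.univ.filter fun i : Fin k => σ i = i).card : ℝ)))
      / (Nat.factorial k) ≤ Real.exp (Real.exp t) := by
  have hk : (0 : ℝ) < k ! := by positivity
  rw [div_le_iff₀ hk]
  rcases le_or_gt t 0 with ht | ht
  · calc ∑ σ : Equiv.Perm (Fin k), exp (t * (#{i | σ i = i} : ℝ))
        ≤ ∑ _σ : Equiv.Perm (Fin k), (1 : ℝ) :=
          sum_le_sum fun σ _ => exp_le_one_iff.2 (mul_nonpos_of_nonpos_of_nonneg ht (by positivity))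
      _ = k ! := by simp [Fintype.card_perm]
      _ ≤ exp (exp t) * k ! := le_mul_of_one_le_left hk.le (one_le_exp (exp_pos t).le)
  · have hu : 0 ≤ exp t - 1 := by linarith [one_le_exp ht.le]
    calc ∑ σ : Equiv.Perm (Fin k), exp (t * (#{i | σ i = i} : ℝ))
        = ∑ σ : Equiv.Perm (Fin k), (1 + (exp t - 1)) ^ #{i | σ i = i} := by
          simp [mul_comm t, exp_nat_mul]
      _ ≤ k ! * exp (exp t - 1) := by
          simpa using Equiv.Perm.sum_one_add_pow_card_fixed_le (α := Fin k) hu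
      _ ≤ exp (exp t) * k ! := by
          rw [mul_comm]
          gcongr
          linarith
end
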